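/- arXiv:2501.07311 — 2 statements merged into one kernel-verified Lean document; each statement's English description precedes it below -/
import Mathlib

section
/- For α = (α_1,…,α_n), β = (β_1,…,β_n) ∈ Z_2^{2n} written in consecutive pairs α_i = (α_{2i−1}, α_{2i}) ∈ Z_2^2, let f(α) = (α_1, α_2 + |α_1|(1,1), …, α_i + Σ_{k<i}|α_k|(1,1), …, α_n + Σ_{k<n}|α_k|(1,1), Σ_{k≤n}|α_k|) ∈ Z_2^{2n+1}, where |α_k| = α_{2k−1} + α_{2k} mod 2. Then f(α)·f(β) ≡ Σ_{i=1}^n |α_i × β_i| mod 2, where |α_i × β_i| = α_{2i−1}β_{2i} + α_{2i}β_{2i−1} mod 2 (well, the cross product magnitude α_{2i−1}β_{2i} − α_{2i}β_{2i−1} taken mod 2). -/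
/-!
Write `sᵢ = Σ_{k<i} |α_k|` and `tᵢ = Σ_{k<i} |β_k|`. Shifting both coordinates of `αᵢ` by `sᵢ`
and of `βᵢ` by `tᵢ` changes their dot product by `sᵢ|βᵢ| + |αᵢ|tᵢ`, the term `2 sᵢ tᵢ` vanishing.
Splitting the product `(Σ|α_k|)(Σ|β_k|)` of the last coordinates into its diagonal and its two
triangular parts gives `Σ |αᵢ||βᵢ|` plus the same corrections, so these cancel mod 2, and
`αᵢ·βᵢ + |αᵢ||βᵢ| = |αᵢ × βᵢ|`.
-/

/-- `|v| = v₁ + v₂ mod 2` for a pair `v ∈ Z_2^2`. -/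
def pabs (v : ZMod 2 × ZMod 2) : ZMod 2 := v.1 + v.2

/-- `|v × w|`: the mod-2 determinant of two 2-vectors. -/
def pcross (v w : ZMod 2 × ZMod 2) : ZMod 2 := v.1 * w.2 + v.2 * w.1

/-- The mod-2 dot product on `Z_2^{2n}` written as `n` consecutive pairs. -/
def pdot {n : ℕ} (a b : Fin n → ZMod 2 × ZMod 2) : ZMod 2 :=
  ∑ i, ((a i).1 * (b i).1 + (a i).2 * (b i).2)

/-- The mod-2 dot product on `Z_2^{2n+1}`, modelled as `(Z_2^2)^n × Z_2`. -/
def fdot {n : ℕ} (a b : (Fin n → ZMod 2 × ZMod 2) × ZMod 2) : ZMod 2 :=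
  pdot a.1 b.1 + a.2 * b.2

/-- The map `f : Z_2^{2n} → Z_2^{2n+1}`,
`f(α) = (α₁, α₂ + |α₁|(1,1), …, αᵢ + Σ_{k<i}|α_k|(1,1), …, Σ_{k≤n}|α_k|)`. -/
def fmap {n : ℕ} (α : Fin n → ZMod 2 × ZMod 2) : (Fin n → ZMod 2 × ZMod 2) × ZMod 2 :=
  (fun i => α i + (∑ k ∈ Finset.Iio i, pabs (α k), ∑ k ∈ Finset.Iio i, pabs (α k)),
   ∑ k, pabs (α k))

open Finset

section
variable {ι : Type*} [LinearOrder ι] [Fintype ι] [LocallyFiniteOrderBot ι] [LocallyFiniteOrderTop ι]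

theorem sum_Iio_add_add_sum_Ioi {M : Type*} [AddCommMonoid M] (f : ι → M) (i : ι) :
    ∑ j ∈ Iio i, f j + (f i + ∑ j ∈ Ioi i, f j) = ∑ j, f j := by
  rw [add_sum_Ioi_eq_sum_Ici, ← sum_add_sum_compl (Iio i)]
  congr 2
  ext; simp

theorem sum_mul_sum_eq_sum_add_sum_Iio {R : Type*} [CommSemiring R] (a b : ι → R) :
    (∑ i, a i) * ∑ i, b i =
      ∑ i, (a i * b i + (∑ k ∈ Iio i, a k) * b i + a i * ∑ k ∈ Iio i, b k) := by
  have upper : ∑ i, ∑ j ∈ Ioi i, a i * b j = ∑ j, ∑ i ∈ Iio j, a i * b j :=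
    sum_comm' fun i j => by simp
  rw [sum_mul_sum, ← sum_congr rfl fun i _ => sum_Iio_add_add_sum_Ioi (fun j => a i * b j) i]
  simp only [sum_add_distrib, upper, sum_mul, mul_sum]
  abel

end

theorem dot_add_diag_add_diag (v w : ZMod 2 × ZMod 2) (s t : ZMod 2) :
    (v + (s, s)).1 * (w + (t, t)).1 + (v + (s, s)).2 * (w + (t, t)).2 =
      v.1 * w.1 + v.2 * w.2 + s * pabs w + pabs v * t := by
  simp only [Prod.fst_add, Prod.snd_add, pabs]
  linear_combination (s * t) * CharTwo.two_eq_zero (R := ZMod 2)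

theorem dot_add_pabs_mul_pabs (v w : ZMod 2 × ZMod 2) :
    v.1 * w.1 + v.2 * w.2 + pabs v * pabs w = pcross v w := by
  simp only [pabs, pcross]
  linear_combination (v.1 * w.1 + v.2 * w.2) * CharTwo.two_eq_zero (R := ZMod 2)

/-- `f(α)·f(β) ≡ Σᵢ |αᵢ × βᵢ| mod 2`. -/
theorem stmt9 {n : ℕ} (α β : Fin n → ZMod 2 × ZMod 2) :
    fdot (fmap α) (fmap β) = ∑ i, pcross (α i) (β i) := by
  simp only [fdot, fmap, pdot, dot_add_diag_add_diag, sum_mul_sum_eq_sum_add_sum_Iio,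
    ← sum_add_distrib, ← dot_add_pabs_mul_pabs]
  refine sum_congr rfl fun i _ => ?_
  linear_combination
    ((∑ k ∈ Iio i, pabs (α k)) * pabs (β i) + pabs (α i) * ∑ k ∈ Iio i, pabs (β k)) *
      CharTwo.two_eq_zero (R := ZMod 2)
end

section
/- The map f : Z_2^{2n} → Z_2^{2n+1}, defined by f(α) = (α_1, α_2 + |α_1|(1,1), …, α_i + Σ_{k<i}|α_k|(1,1), …, Σ_{k=1}^n|α_k|) with |α_k| = α_{2k−1} + α_{2k} mod 2, is an injective group homomorphism whose image is exactly the even subgroup (Z_2^{2n+1})_ev = {b ∈ Z_2^{2n+1} : b·b ≡ 0 mod 2}. -/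
/-!
The first `2n` coordinates of `f(α)` are the shear `α_i + Σ_{k<i}|α_k|(1,1)` of `α`. Adding a multiple of
`(1,1)` to a pair does not change its parity `|·|`, so this shear has the same partial parity sums
as `α` and is therefore an involution; in particular `f` is injective. Everything is linear over
`Z_2` because `|·|` is. Finally, since `z² = z` in `Z_2`, `b·b` is the total parity of `b`, and for
`b = f(α)` the last coordinate repeats the parity `Σ_k |α_k|` of the other ones.
-/

open Finset

lemma pabs_add (v w : ZMod 2 × ZMod 2) : pabs (v + w) = pabs v + pabs w := by
  simp only [pabs, Prod.fst_add, Prod.snd_add]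
  ring

lemma pabs_add_diag (v : ZMod 2 × ZMod 2) (s : ZMod 2) : pabs (v + (s, s)) = pabs v := by
  rw [pabs_add]
  simp only [pabs, CharTwo.add_self_eq_zero, add_zero]

section Shear

variable {n : ℕ}

def shear (α : Fin n → ZMod 2 × ZMod 2) : Fin n → ZMod 2 × ZMod 2 :=
  fun i => α i + (∑ k ∈ Iio i, pabs (α k), ∑ k ∈ Iio i, pabs (α k))

lemma fmap_eq_shear (α : Fin n → ZMod 2 × ZMod 2) : fmap α = (shear α, ∑ k, pabs (α k)) := rfl

lemma pabs_shear (α : Fin n → ZMod 2 × ZMod 2) (i : Fin n) : pabs (shear α i) = pabs (α i) :=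
  pabs_add_diag _ _

lemma shear_involutive : Function.Involutive (shear (n := n)) := by
  intro α
  funext i
  show shear α i + (∑ k ∈ Iio i, pabs (shear α k), ∑ k ∈ Iio i, pabs (shear α k)) = α i
  simp only [pabs_shear]
  simp only [shear, add_assoc, Prod.mk_add_mk, CharTwo.add_self_eq_zero, Prod.mk_zero_zero,
    add_zero]

lemma shear_add (α β : Fin n → ZMod 2 × ZMod 2) : shear (α + β) = shear α + shear β := by
  funext i
  simp only [shear, Pi.add_apply, pabs_add, sum_add_distrib, ← Prod.mk_add_mk]
  abel

end Shear

lemma fdot_self {n : ℕ} (b : (Fin n → ZMod 2 × ZMod 2) × ZMod 2) :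
    fdot b b = ∑ i, pabs (b.1 i) + b.2 := by
  simp only [fdot, pdot, pabs, ← sq, ZMod.pow_card]

section Fmap

variable {n : ℕ}

lemma fmap_injective : Function.Injective (fmap (n := n)) :=
  fun _ _ h => shear_involutive.injective (congrArg Prod.fst h)

lemma fmap_add (α β : Fin n → ZMod 2 × ZMod 2) : fmap (α + β) = fmap α + fmap β := by
  simp only [fmap_eq_shear, shear_add, Pi.add_apply, pabs_add, sum_add_distrib, Prod.mk_add_mk]

lemma range_fmap : Set.range (fmap (n := n)) = {b | fdot b b = 0} := by
  ext ⟨b, t⟩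
  simp only [Set.mem_range, Set.mem_ofPred_eq, fdot_self]
  constructor
  · rintro ⟨α, hα⟩
    simp only [fmap_eq_shear, Prod.mk.injEq] at hα
    obtain ⟨rfl, rfl⟩ := hα
    simp only [pabs_shear, CharTwo.add_self_eq_zero]
  · intro h
    refine ⟨shear b, ?_⟩
    rw [fmap_eq_shear, shear_involutive b]
    simp only [pabs_shear, Prod.mk.injEq, true_and]
    linear_combination h - CharTwo.add_self_eq_zero t

end Fmap

/-- `f` is an injective group homomorphism from `Z_2^{2n}` to `Z_2^{2n+1}`
whose image is exactly the even subgroup `{b : b·b = 0}`. -/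
theorem stmt10 {n : ℕ} :
    Function.Injective (fmap (n := n)) ∧
    (∀ α β : Fin n → ZMod 2 × ZMod 2, fmap (α + β) = fmap α + fmap β) ∧
    Set.range (fmap (n := n)) = {b | fdot b b = 0} :=
  ⟨fmap_injective, fmap_add, range_fmap⟩
end
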